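/- arXiv:2212.11609 — 2 statements merged into one kernel-verified Lean document; each statement's English description precedes it below -/
import Mathlib

section
/- For all real p, r with 0 ≤ p ≤ 4/21 and 0 ≤ r ≤ 2/7, the function g(p,r) = √3·(3-2p)·(3+r) / ((3-2r)·(√3 + √3·p)) satisfies g(p,r) ≤ 69/17. -/
/-! The factor `√3` cancels, leaving `(3 - 2p)(3 + r) / ((3 - 2r)(1 + p))`, which decreases in `p`
and increases in `r`; its value at the corner `(p, r) = (0, 2/7)` is exactly `69/17`. -/

theorem mul_mul_div_mul_add_mul_cancel {K : Type*} [Field K] {c : K} (hc : c ≠ 0) (a b d p : K) :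
    c * a * b / (d * (c + c * p)) = a * b / (d * (1 + p)) := by
  rw [show c * a * b = c * (a * b) by ring, show d * (c + c * p) = c * (d * (1 + p)) by ring]
  exact mul_div_mul_left _ _ hc

theorem div_le_of_nonneg_of_le_two_sevenths {p r : ℝ} (hp0 : 0 ≤ p) (hr : r ≤ 2/7) :
    (3 - 2*p) * (3 + r) / ((3 - 2*r) * (1 + p)) ≤ 69/17 := by
  rw [div_le_iff₀ (mul_pos (by linarith) (by linarith))]
  -- `69 (3 - 2r)(1 + p) - 17 (3 - 2p)(3 + r) = 27 (2 - 7r) + p (309 - 104r)`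
  nlinarith [mul_nonneg hp0 (sub_nonneg.mpr hr)]

theorem stmt1_general (p r : ℝ) (hp0 : 0 ≤ p) (hr : r ≤ 2/7) :
    Real.sqrt 3 * (3 - 2*p) * (3 + r) / ((3 - 2*r) * (Real.sqrt 3 + Real.sqrt 3 * p))
      ≤ 69/17 := by
  rw [mul_mul_div_mul_add_mul_cancel (Real.sqrt_pos.mpr three_pos).ne']
  exact div_le_of_nonneg_of_le_two_sevenths hp0 hr

theorem stmt1 (p r : ℝ) (hp0 : 0 ≤ p) (hp : p ≤ 4/21) (hr0 : 0 ≤ r) (hr : r ≤ 2/7) :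
    Real.sqrt 3 * (3 - 2*p) * (3 + r) / ((3 - 2*r) * (Real.sqrt 3 + Real.sqrt 3 * p))
      ≤ 69/17 :=
  stmt1_general p r hp0 hr
end

section
/- For the regular pentagon P with vertices (cos(2πi/5), sin(2πi/5)), i = 1,…,5, the inscribed triangle T with one vertex (1,0) and opposite side on the line x = -1/2 satisfies: T ⊆ P ⊆ h(T), where h is the homothety with ratio (7-√5)/2 centered at the common centroid of P and T. Moreover the centroids of P and T coincide (both equal the origin). -/
/-! Since cos (π / 5) = (1 + √5) / 4, all vertices of the pentagon have explicit coordinates in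
`√5` and `sin (π / 5)`. The line x = -1/2 meets the edges V₁V₂ and V₃V₄ at (-1/2, ±chordHeight);
these points lie on the supporting lines of those edges, hence on the frontier. Both inclusions
reduce to vertices by convexity: the vertices of the triangle lie in the pentagon, and every vertex
of the pentagon is an explicit convex combination of the vertices of the scaled triangle. -/

open Real

noncomputable def pentVertex (i : ℕ) : ℝ × ℝ :=
  (Real.cos (2 * π * i / 5), Real.sin (2 * π * i / 5))

noncomputable def pentagonP : Set (ℝ × ℝ) :=
  convexHull ℝ {pentVertex 1, pentVertex 2, pentVertex 3, pentVertex 4, pentVertex 5}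

theorem mem_frontier_of_le_of_eq {E : Type*} [AddCommGroup E] [TopologicalSpace E]
    [Module ℝ E] [ContinuousAdd E] [ContinuousSMul ℝ E] {s : Set E} {f : E →L[ℝ] ℝ}
    (hf : f ≠ 0) {m : ℝ} (hs : ∀ y ∈ s, f y ≤ m) {x : E} (hx : x ∈ s) (hfx : f x = m) :
    x ∈ frontier s := by
  refine ⟨subset_closure hx, fun hint => ?_⟩
  have hint' : interior s ⊆ f ⁻¹' Set.Iio m := by
    rw [← interior_Iic, (f.isOpenMap_of_ne_zero hf).preimage_interior_eq_interior_preimage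
      f.continuous]
    exact interior_mono hs
  exact (hint' hint).ne hfx

theorem mem_convexHull_triple {E : Type*} [AddCommGroup E] [Module ℝ E] {a b c p : E}
    {wa wb wc : ℝ} (ha : 0 ≤ wa) (hb : 0 ≤ wb) (hc : 0 ≤ wc) (hw : wa + wb + wc = 1)
    (hp : wa • a + wb • b + wc • c = p) : p ∈ convexHull ℝ {a, b, c} := by
  have := (convex_convexHull ℝ ({a, b, c} : Set E)).sum_mem (t := Finset.univ)
    (w := ![wa, wb, wc]) (z := ![a, b, c])
    (fun i _ => by fin_cases i <;> assumption) (by simpa [Fin.sum_univ_three] using hw)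
    (fun i _ => subset_convexHull ℝ _ (by fin_cases i <;> simp))
  simpa [Fin.sum_univ_three, hp] using this

theorem homothety_zero_image_convexHull_triple {E : Type*} [AddCommGroup E] [Module ℝ E]
    (k : ℝ) (a b c : E) :
    AffineMap.homothety (0 : E) k '' convexHull ℝ {a, b, c} =
      convexHull ℝ {k • a, k • b, k • c} := by
  simp [AffineMap.image_convexHull, Set.image_insert_eq, AffineMap.homothety_apply]

theorem pentVertex_one :
    pentVertex 1 = ((√5 - 1) / 4, sin (π / 5) * (1 + √5) / 2) := by
  have h5 : √5 ^ 2 = 5 := sq_sqrt (by norm_num)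
  rw [pentVertex, Nat.cast_one, show 2 * π * 1 / 5 = 2 * (π / 5) by ring, cos_two_mul,
    sin_two_mul, cos_pi_div_five]
  ext
  · linear_combination (1 / 8 : ℝ) * h5
  · ring

theorem pentVertex_two : pentVertex 2 = (-(1 + √5) / 4, sin (π / 5)) := by
  rw [pentVertex, Nat.cast_ofNat, show 2 * π * 2 / 5 = π - π / 5 by ring, cos_pi_sub,
    sin_pi_sub, cos_pi_div_five, neg_div]

theorem pentVertex_three : pentVertex 3 = (-(1 + √5) / 4, -sin (π / 5)) := by
  rw [pentVertex, Nat.cast_ofNat, show 2 * π * 3 / 5 = π / 5 + π by ring, cos_add_pi,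
    sin_add_pi, cos_pi_div_five, neg_div]

theorem pentVertex_four :
    pentVertex 4 = ((√5 - 1) / 4, -(sin (π / 5) * (1 + √5) / 2)) := by
  rw [pentVertex, Nat.cast_ofNat, show 2 * π * 4 / 5 = -(2 * π * 1 / 5) + 2 * π by ring,
    cos_add_two_pi, sin_add_two_pi, cos_neg, sin_neg]
  obtain ⟨hcos, hsin⟩ := Prod.mk.inj pentVertex_one
  rw [← hcos, ← hsin, Nat.cast_one]

theorem pentVertex_five : pentVertex 5 = (1, 0) := by
  rw [pentVertex, Nat.cast_ofNat, show 2 * π * 5 / 5 = 2 * π by ring, cos_two_pi, sin_two_pi]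

theorem pentVertex_mem_pentagonP {i : ℕ} (h1 : 1 ≤ i) (h5 : i ≤ 5) :
    pentVertex i ∈ pentagonP := by
  apply subset_convexHull
  interval_cases i <;> simp

theorem sum_pentVertex :
    pentVertex 1 + pentVertex 2 + pentVertex 3 + pentVertex 4 + pentVertex 5 = 0 := by
  rw [pentVertex_one, pentVertex_two, pentVertex_three, pentVertex_four, pentVertex_five]
  ext <;> simp only [Prod.fst_add, Prod.snd_add, Prod.fst_zero, Prod.snd_zero] <;> ring

-- `(-1 / 2, chordHeight) = ((5 - √5) / 10) • V₁ + ((5 + √5) / 10) • V₂`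
noncomputable def chordHeight : ℝ := sin (π / 5) * (5 + 3 * √5) / 10

theorem chordHeight_pos : 0 < chordHeight := by
  have := sin_pos_of_pos_of_lt_pi (by positivity : 0 < π / 5) (by linarith [pi_pos])
  unfold chordHeight
  positivity

theorem chord_mem_pentagonP {σ : ℝ} (hσ : σ = 1 ∨ σ = -1) :
    ((-1 / 2 : ℝ), σ * chordHeight) ∈ pentagonP := by
  have h5 : √5 ^ 2 = 5 := sq_sqrt (by norm_num)
  have h52 : √5 < 5 := by nlinarith [sqrt_nonneg 5]
  have hu : (0 : ℝ) ≤ (5 - √5) / 10 := by linarith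
  have hv : (0 : ℝ) ≤ (5 + √5) / 10 := by positivity
  have huv : (5 - √5) / 10 + (5 + √5) / 10 = 1 := by ring
  have hP : Convex ℝ pentagonP := convex_convexHull ℝ _
  rcases hσ with rfl | rfl
  · convert hP (pentVertex_mem_pentagonP (i := 1) le_rfl (by norm_num))
      (pentVertex_mem_pentagonP (i := 2) (by norm_num) (by norm_num)) hu hv huv using 1
    rw [pentVertex_one, pentVertex_two, chordHeight]
    ext <;> simp only [Prod.fst_add, Prod.snd_add, Prod.smul_fst, Prod.smul_snd, smul_eq_mul]
    · linear_combination (1 / 20 : ℝ) * h5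
    · linear_combination (sin (π / 5) / 20) * h5
  · convert hP (pentVertex_mem_pentagonP (i := 3) (by norm_num) (by norm_num))
      (pentVertex_mem_pentagonP (i := 4) (by norm_num) (by norm_num)) hv hu (by linarith) using 1
    rw [pentVertex_three, pentVertex_four, chordHeight]
    ext <;> simp only [Prod.fst_add, Prod.snd_add, Prod.smul_fst, Prod.smul_snd, smul_eq_mul]
    · linear_combination (1 / 20 : ℝ) * h5
    · linear_combination (-sin (π / 5) / 20) * h5

-- Its level set at `sin (π / 5) * (1 + √5)` is the line through V₁V₂ for `σ = 1`,
-- through V₄V₃ for `σ = -1`.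
noncomputable def edgeFunctional (σ : ℝ) : ℝ × ℝ →L[ℝ] ℝ :=
  (σ * √5) • ContinuousLinearMap.snd ℝ ℝ ℝ -
    (sin (π / 5) * (√5 - 1)) • ContinuousLinearMap.fst ℝ ℝ ℝ

theorem edgeFunctional_apply (σ : ℝ) (p : ℝ × ℝ) :
    edgeFunctional σ p = σ * √5 * p.2 - sin (π / 5) * (√5 - 1) * p.1 := rfl

theorem edgeFunctional_ne_zero {σ : ℝ} (hσ : σ ≠ 0) : edgeFunctional σ ≠ 0 := by
  intro h
  have := congrArg (fun f : ℝ × ℝ →L[ℝ] ℝ => f (0, 1)) h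
  simp [edgeFunctional_apply, hσ] at this

theorem pentagonP_subset_edgeFunctional_le {σ : ℝ} (hσ : σ = 1 ∨ σ = -1) :
    pentagonP ⊆ {p | edgeFunctional σ p ≤ sin (π / 5) * (1 + √5)} := by
  have h5 : √5 ^ 2 = 5 := sq_sqrt (by norm_num)
  have h52 : 0 < √5 - 1 := by nlinarith [sqrt_nonneg 5]
  have hs := sin_pos_of_pos_of_lt_pi (by positivity : 0 < π / 5) (by linarith [pi_pos])
  refine convexHull_min ?_ (convex_halfSpace_le (edgeFunctional σ).isLinear _)
  intro p hp
  simp only [Set.mem_insert_iff, Set.mem_singleton_iff] at hp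
  rcases hp with rfl | rfl | rfl | rfl | rfl <;>
    rcases hσ with rfl | rfl <;>
    simp only [Set.mem_ofPred_eq, edgeFunctional_apply, pentVertex_one, pentVertex_two,
      pentVertex_three, pentVertex_four, pentVertex_five] <;>
    nlinarith [mul_pos hs h52]

theorem chord_mem_frontier_pentagonP {σ : ℝ} (hσ : σ = 1 ∨ σ = -1) :
    ((-1 / 2 : ℝ), σ * chordHeight) ∈ frontier pentagonP := by
  have h5 : √5 ^ 2 = 5 := sq_sqrt (by norm_num)
  have hσ2 : σ * σ = 1 := by rcases hσ with rfl | rfl <;> norm_num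
  refine mem_frontier_of_le_of_eq (edgeFunctional_ne_zero (by rintro rfl; simp at hσ))
    (pentagonP_subset_edgeFunctional_le hσ) (chord_mem_pentagonP hσ) ?_
  rw [edgeFunctional_apply, chordHeight]
  linear_combination
    (sin (π / 5) * (5 + 3 * √5) * √5 / 10) * hσ2 + (3 * sin (π / 5) / 10) * h5

theorem triangle_subset_pentagonP :
    convexHull ℝ {((1 : ℝ), (0 : ℝ)), (-1 / 2, chordHeight), (-1 / 2, -chordHeight)} ⊆
      pentagonP := by
  refine convexHull_min ?_ (convex_convexHull ℝ _)
  rintro p (rfl | rfl | rfl)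
  · exact pentVertex_five ▸ pentVertex_mem_pentagonP (by norm_num) le_rfl
  · simpa using chord_mem_pentagonP (Or.inl rfl)
  · simpa using chord_mem_pentagonP (Or.inr rfl)

theorem pentagonP_subset_homothety_triangle :
    pentagonP ⊆ AffineMap.homothety ((0, 0) : ℝ × ℝ) ((7 - √5) / 2) ''
      convexHull ℝ {((1 : ℝ), (0 : ℝ)), (-1 / 2, chordHeight), (-1 / 2, -chordHeight)} := by
  have h5 : √5 ^ 2 = 5 := sq_sqrt (by norm_num)
  have h52 : 2 < √5 := by nlinarith [sqrt_nonneg 5]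
  have h53 : √5 < 3 := by nlinarith [sqrt_nonneg 5]
  rw [← Prod.zero_eq_mk, homothety_zero_image_convexHull_triple]
  refine convexHull_min ?_ (convex_convexHull ℝ _)
  rintro p (rfl | rfl | rfl | rfl | rfl)
  · refine mem_convexHull_triple (wa := (7 + √5) / 22) (wb := (15 - √5) / 22) (wc := 0)
      (by linarith) (by linarith) le_rfl (by ring) ?_
    rw [pentVertex_one, chordHeight]
    ext <;> simp only [Prod.fst_add, Prod.snd_add, Prod.smul_fst, Prod.smul_snd, smul_eq_mul]
    · linear_combination (-3 / 88 : ℝ) * h5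
    · linear_combination (sin (π / 5) * (3 * √5 - 61) / 440) * h5
  · refine mem_convexHull_triple (wa := (8 - 2 * √5) / 33) (wb := (5 + 7 * √5) / 33)
      (wc := (20 - 5 * √5) / 33) (by linarith) (by linarith) (by linarith) (by ring) ?_
    rw [pentVertex_two, chordHeight]
    ext <;> simp only [Prod.fst_add, Prod.snd_add, Prod.smul_fst, Prod.smul_snd, smul_eq_mul]
    · linear_combination (1 / 22 : ℝ) * h5
    · linear_combination (sin (π / 5) * (79 - 12 * √5) / 220) * h5
  · refine mem_convexHull_triple (wa := (8 - 2 * √5) / 33) (wb := (20 - 5 * √5) / 33)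
      (wc := (5 + 7 * √5) / 33) (by linarith) (by linarith) (by linarith) (by ring) ?_
    rw [pentVertex_three, chordHeight]
    ext <;> simp only [Prod.fst_add, Prod.snd_add, Prod.smul_fst, Prod.smul_snd, smul_eq_mul]
    · linear_combination (1 / 22 : ℝ) * h5
    · linear_combination (sin (π / 5) * (12 * √5 - 79) / 220) * h5
  · refine mem_convexHull_triple (wa := (7 + √5) / 22) (wb := 0) (wc := (15 - √5) / 22)
      (by linarith) le_rfl (by linarith) (by ring) ?_
    rw [pentVertex_four, chordHeight]
    ext <;> simp only [Prod.fst_add, Prod.snd_add, Prod.smul_fst, Prod.smul_snd, smul_eq_mul]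
    · linear_combination (-3 / 88 : ℝ) * h5
    · linear_combination (sin (π / 5) * (61 - 3 * √5) / 440) * h5
  · refine mem_convexHull_triple (wa := (18 + √5) / 33) (wb := (15 - √5) / 66)
      (wc := (15 - √5) / 66) (by linarith) (by linarith) (by linarith) (by ring) ?_
    rw [pentVertex_five]
    ext <;> simp only [Prod.fst_add, Prod.snd_add, Prod.smul_fst, Prod.smul_snd, smul_eq_mul]
    · linear_combination (-1 / 44 : ℝ) * h5
    · ring

theorem stmt15 :
    ∃ b : ℝ, 0 < b ∧ ((-1/2, b) : ℝ × ℝ) ∈ frontier pentagonP ∧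
      ((-1/2, -b) : ℝ × ℝ) ∈ frontier pentagonP ∧
      (convexHull ℝ {((1:ℝ), (0:ℝ)), (-1/2, b), (-1/2, -b)} ⊆ pentagonP ∧
       pentagonP ⊆
         AffineMap.homothety ((0, 0) : ℝ × ℝ) ((7 - Real.sqrt 5) / 2) ''
           convexHull ℝ {((1:ℝ), (0:ℝ)), (-1/2, b), (-1/2, -b)} ∧
       ((1/5 : ℝ) •
           (pentVertex 1 + pentVertex 2 + pentVertex 3 + pentVertex 4 + pentVertex 5)
         = ((0, 0) : ℝ × ℝ)) ∧
       ((1/3 : ℝ) • (((1, 0) : ℝ × ℝ) + (-1/2, b) + (-1/2, -b)) = ((0, 0) : ℝ × ℝ))) := by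
  refine ⟨chordHeight, chordHeight_pos, ?_, ?_, triangle_subset_pentagonP,
    pentagonP_subset_homothety_triangle, by rw [sum_pentVertex, smul_zero]; rfl, ?_⟩
  · simpa using chord_mem_frontier_pentagonP (Or.inl rfl)
  · simpa using chord_mem_frontier_pentagonP (Or.inr rfl)
  · ext <;> simp only [Prod.fst_add, Prod.snd_add, Prod.smul_fst, Prod.smul_snd, smul_eq_mul] <;>
      ring
end
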